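/- Let a₀, f₀, q₀ : ℝ × ℝ → ℂ be smooth and satisfy ∂_t a₀ = ∂_x(f₀·q₀), ∂_t∂_x f₀ = −2·a₀·f₀ and ∂_t∂_x q₀ = −2·a₀·q₀. Let Δ, Γ ∈ M_n(ℂ) be invertible constant matrices. Let θ₁, θ₂ : ℝ × ℝ → ℂⁿ (regarded as 1×n row vectors) and η₁, η₂ : ℝ × ℝ → ℂⁿ (regarded as n×1 column vectors) be smooth solutions of the linear system: (∂_x θ₁)·Δ = −a₀·θ₁ − (∂_x f₀)·θ₂, (∂_x θ₂)·Δ = a₀·θ₂ − (∂_x q₀)·θ₁, ∂_t θ₁ = (1/2)·θ₁·Δ + f₀·θ₂, ∂_t θ₂ = −(1/2)·θ₂·Δ − q₀·θ₁, Γ·∂_x η₁ = a₀·η₁ + (∂_x q₀)·η₂, Γ·∂_x η₂ = −a₀·η₂ + (∂_x f₀)·η₁, ∂_t η₁ = −(1/2)·Γ·η₁ + q₀·η₂, ∂_t η₂ = (1/2)·Γ·η₂ − f₀·η₁. Let Ω : ℝ × ℝ → M_n(ℂ) be smooth, pointwise invertible, and satisfy Γ·Ω − Ω·Δ = η₁·θ₁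 + η₂·θ₂, (∂_x Ω)·Δ = −(∂_x η₁)·θ₁ − (∂_x η₂)·θ₂ and ∂_t Ω = −(1/2)·η₁·θ₁ + (1/2)·η₂·θ₂. Then a := a₀ − ∂_x(θ₁·Ω⁻¹·η₁), f := f₀ − θ₁·Ω⁻¹·η₂ and q := q₀ − θ₂·Ω⁻¹·η₁ also satisfy ∂_t a = ∂_x(f·q), ∂_t∂_x f = −2·a·f and ∂_t∂_x q = −2·a·q at every point. -/

import Mathlib

open Matrix

/-- Partial x-derivative of a scalar function on ℝ × ℝ. -/
noncomputable def pdx (f : ℝ × ℝ → ℂ) (p : ℝ × ℝ) : ℂ := fderiv ℝ f p (1, 0)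

/-- Partial t-derivative of a scalar function on ℝ × ℝ. -/
noncomputable def pdt (f : ℝ × ℝ → ℂ) (p : ℝ × ℝ) : ℂ := fderiv ℝ f p (0, 1)

/-- Entrywise partial x-derivative of a matrix-valued function on ℝ × ℝ. -/
noncomputable def pdxM {m k : ℕ} (M : ℝ × ℝ → Matrix (Fin m) (Fin k) ℂ)
    (p : ℝ × ℝ) : Matrix (Fin m) (Fin k) ℂ :=
  Matrix.of fun i j => fderiv ℝ (fun q => M q i j) p (1, 0)

/-- Entrywise partial t-derivative of a matrix-valued function on ℝ × ℝ. -/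
noncomputable def pdtM {m k : ℕ} (M : ℝ × ℝ → Matrix (Fin m) (Fin k) ℂ)
    (p : ℝ × ℝ) : Matrix (Fin m) (Fin k) ℂ :=
  Matrix.of fun i j => fderiv ℝ (fun q => M q i j) p (0, 1)

namespace Aux17

noncomputable def pd (d : ℝ × ℝ) (f : ℝ × ℝ → ℂ) (p : ℝ × ℝ) : ℂ := fderiv ℝ f p d

noncomputable def pdM {m k : ℕ} (d : ℝ × ℝ) (M : ℝ × ℝ → Matrix (Fin m) (Fin k) ℂ)
    (p : ℝ × ℝ) : Matrix (Fin m) (Fin k) ℂ :=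
  Matrix.of fun i j => fderiv ℝ (fun q => M q i j) p d

abbrev SmM {m k : ℕ} (M : ℝ × ℝ → Matrix (Fin m) (Fin k) ℂ) : Prop :=
  ∀ i j, ContDiff ℝ (⊤ : ℕ∞) fun p => M p i j

theorem SmM.mul {m k l : ℕ} {M : ℝ × ℝ → Matrix (Fin m) (Fin k) ℂ}
    {N : ℝ × ℝ → Matrix (Fin k) (Fin l) ℂ} (hM : SmM M) (hN : SmM N) :
    SmM fun p => M p * N p := by
  intro i j
  simp only [Matrix.mul_apply]
  exact ContDiff.sum fun s _ => (hM i s).mul (hN s j)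

theorem SmM.const {m k : ℕ} (C : Matrix (Fin m) (Fin k) ℂ) : SmM fun _ => C :=
  fun _ _ => contDiff_const

theorem SmM.constMul {m k l : ℕ} (C : Matrix (Fin m) (Fin k) ℂ)
    {N : ℝ × ℝ → Matrix (Fin k) (Fin l) ℂ} (hN : SmM N) : SmM fun p => C * N p :=
  (SmM.const C).mul hN

/-- product rule for entrywise matrix derivative -/
theorem pdM_mul {m k l : ℕ} {M : ℝ × ℝ → Matrix (Fin m) (Fin k) ℂ}
    {N : ℝ × ℝ → Matrix (Fin k) (Fin l) ℂ} (hM : SmM M) (hN : SmM N)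
    (d : ℝ × ℝ) (p : ℝ × ℝ) :
    pdM d (fun p => M p * N p) p = pdM d M p * N p + M p * pdM d N p := by
  ext i j
  have h : ∀ s : Fin k, HasFDerivAt (fun q => M q i s * N q s j)
      (M p i s • fderiv ℝ (fun q => N q s j) p +
        N p s j • fderiv ℝ (fun q => M q i s) p) p :=
    fun s => HasFDerivAt.mul ((hM i s).differentiable (by simp) p).hasFDerivAt
      ((hN s j).differentiable (by simp) p).hasFDerivAt
  have h2 : HasFDerivAt (fun q => (M q * N q) i j)
      (∑ s, (M p i s • fderiv ℝ (fun q => N q s j) p +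
        N p s j • fderiv ℝ (fun q => M q i s) p)) p := by
    simp only [Matrix.mul_apply]
    exact HasFDerivAt.fun_sum fun s _ => h s
  show fderiv ℝ (fun q => (M q * N q) i j) p d = _
  rw [h2.fderiv]
  simp only [Matrix.add_apply, Matrix.mul_apply, pdM, Matrix.of_apply,
    ContinuousLinearMap.sum_apply, ContinuousLinearMap.add_apply,
    ContinuousLinearMap.smul_apply, smul_eq_mul, Finset.sum_add_distrib]
  rw [add_comm]
  congr 1
  · exact Finset.sum_congr rfl fun s _ => by ring

theorem pdM_const {m k : ℕ} (C : Matrix (Fin m) (Fin k) ℂ) (d p) :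
    pdM d (fun _ => C) p = 0 := by
  ext i j
  simp [pdM, fderiv_const]

theorem pdM_constMul {m k l : ℕ} (C : Matrix (Fin m) (Fin k) ℂ)
    {N : ℝ × ℝ → Matrix (Fin k) (Fin l) ℂ} (hN : SmM N) (d p) :
    pdM d (fun p => C * N p) p = C * pdM d N p := by
  rw [pdM_mul (SmM.const C) hN, pdM_const]
  simp

/-- scalar product rule -/
theorem pd_mul {g h : ℝ × ℝ → ℂ} (hg : ContDiff ℝ (⊤ : ℕ∞) g) (hh : ContDiff ℝ (⊤ : ℕ∞) h) (d p) :
    pd d (fun p => g p * h p) p = pd d g p * h p + g p * pd d h p := by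
  unfold pd
  rw [fderiv_fun_mul ((hg.differentiable (by simp)) p) ((hh.differentiable (by simp)) p)]
  simp [smul_eq_mul]
  ring

theorem pd_sub {g h : ℝ × ℝ → ℂ} (hg : Differentiable ℝ g) (hh : Differentiable ℝ h) (d p) :
    pd d (fun p => g p - h p) p = pd d g p - pd d h p := by
  unfold pd
  rw [fderiv_fun_sub (hg p) (hh p)]
  simp

theorem pd_const (c : ℂ) (d p) : pd d (fun _ => c) p = 0 := by simp [pd]

/-- smoothness of a directional derivative of a smooth function -/
theorem contDiff_pd {g : ℝ × ℝ → ℂ} (hg : ContDiff ℝ (⊤ : ℕ∞) g) (d : ℝ × ℝ) :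
    ContDiff ℝ (⊤ : ℕ∞) (pd d g) := by
  have : pd d g = fun p => (ContinuousLinearMap.apply ℝ ℂ d) (fderiv ℝ g p) := rfl
  rw [this]
  exact (ContinuousLinearMap.apply ℝ ℂ d).contDiff.comp (hg.fderiv_right (by simp))

/-- Clairaut / symmetry of second derivatives -/
theorem pd_comm {g : ℝ × ℝ → ℂ} (hg : ContDiff ℝ (⊤ : ℕ∞) g) (d e : ℝ × ℝ) (p : ℝ × ℝ) :
    pd d (pd e g) p = pd e (pd d g) p := by
  have hdiff : DifferentiableAt ℝ (fderiv ℝ g) p :=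
    ((hg.fderiv_right (m := 1) (WithTop.coe_le_coe.mpr le_top)).differentiable one_ne_zero) p
  have hsym : ∀ v w, fderiv ℝ (fderiv ℝ g) p v w = fderiv ℝ (fderiv ℝ g) p w v :=
    (hg.contDiffAt.isSymmSndFDerivAt (by rw [minSmoothness_of_isRCLikeNormedField]; exact WithTop.coe_le_coe.mpr le_top))
  have key : ∀ v w : ℝ × ℝ, pd w (pd v g) p = fderiv ℝ (fderiv ℝ g) p w v := by
    intro v w
    have h1 : HasFDerivAt (fun r => (ContinuousLinearMap.apply ℝ ℂ v) (fderiv ℝ g r))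
        ((ContinuousLinearMap.apply ℝ ℂ v).comp (fderiv ℝ (fderiv ℝ g) p)) p :=
      (ContinuousLinearMap.apply ℝ ℂ v).hasFDerivAt.comp p hdiff.hasFDerivAt
    have : pd v g = fun r => (ContinuousLinearMap.apply ℝ ℂ v) (fderiv ℝ g r) := rfl
    rw [pd, this, h1.fderiv]
    rfl
  rw [key e d, key d e, hsym]

theorem contDiff_finset_prod {ι : Type*} (s : Finset ι) (f : ι → ℝ × ℝ → ℂ)
    (h : ∀ i, ContDiff ℝ (⊤ : ℕ∞) (f i)) : ContDiff ℝ (⊤ : ℕ∞) fun p => ∏ i ∈ s, f i p := by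
  classical
  induction s using Finset.induction with
  | empty => simpa using contDiff_const
  | insert _ _ hx ih =>
      simp only [Finset.prod_insert hx]
      exact (h _).mul ih

theorem SmM.det {n : ℕ} {M : ℝ × ℝ → Matrix (Fin n) (Fin n) ℂ} (h : SmM M) :
    ContDiff ℝ (⊤ : ℕ∞) fun p => (M p).det := by
  simp only [Matrix.det_apply']
  exact ContDiff.sum fun σ _ => contDiff_const.mul
    (contDiff_finset_prod _ _ fun i => h (σ i) i)

theorem SmM.inv {n : ℕ} {M : ℝ × ℝ → Matrix (Fin n) (Fin n) ℂ} (h : SmM M)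
    (hinv : ∀ p, IsUnit (M p)) : SmM fun p => (M p)⁻¹ := by
  intro i j
  have hd : ∀ p, (M p).det ≠ 0 := fun p => by
    have := (Matrix.isUnit_iff_isUnit_det (M p)).mp (hinv p)
    exact IsUnit.ne_zero this
  have heq : (fun p => (M p)⁻¹ i j) =
      fun p => ((M p).det)⁻¹ * ((M p).updateRow j (Pi.single i 1)).det := by
    funext p
    rw [Matrix.inv_def, Matrix.smul_apply, Ring.inverse_eq_inv, smul_eq_mul,
      Matrix.adjugate_apply]
  rw [heq]
  have hadj : ContDiff ℝ (⊤ : ℕ∞) fun p => ((M p).updateRow j (Pi.single i 1)).det := by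
    apply SmM.det
    intro i' j'
    by_cases hij : i' = j
    · subst hij
      simp only [Matrix.updateRow_self]
      exact contDiff_const
    · simp only [Matrix.updateRow_apply, if_neg hij]
      exact h i' j'
  have hdetinv : ContDiff ℝ (⊤ : ℕ∞) fun p => ((M p).det)⁻¹ := by
    rw [contDiff_iff_contDiffAt]
    intro p
    exact (contDiffAt_inv ℝ (hd p)).comp p (h.det.contDiffAt)
  exact hdetinv.mul hadj

theorem pdM_inv {n : ℕ} {Ω : ℝ × ℝ → Matrix (Fin n) (Fin n) ℂ} (hΩ : SmM Ω)
    (hinv : ∀ p, IsUnit (Ω p)) (d p) :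
    pdM d (fun p => (Ω p)⁻¹) p = -((Ω p)⁻¹ * pdM d Ω p * (Ω p)⁻¹) := by
  have hdet : ∀ p, IsUnit (Ω p).det := fun p =>
    (Matrix.isUnit_iff_isUnit_det (Ω p)).mp (hinv p)
  have hW : SmM fun p => (Ω p)⁻¹ := hΩ.inv hinv
  have h1 : (fun p => (Ω p)⁻¹ * Ω p) = fun _ => (1 : Matrix (Fin n) (Fin n) ℂ) :=
    funext fun p => Matrix.nonsing_inv_mul _ (hdet p)
  have h2 := pdM_mul hW hΩ d p
  rw [h1, pdM_const] at h2
  have h3 : pdM d (fun p => (Ω p)⁻¹) p * Ω p = -((Ω p)⁻¹ * pdM d Ω p) := by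
    have h4 : pdM d (fun p => (Ω p)⁻¹) p * Ω p + (Ω p)⁻¹ * pdM d Ω p = 0 := h2.symm
    exact eq_neg_of_add_eq_zero_left h4
  calc pdM d (fun p => (Ω p)⁻¹) p
      = pdM d (fun p => (Ω p)⁻¹) p * (Ω p * (Ω p)⁻¹) := by
        rw [Matrix.mul_nonsing_inv _ (hdet p), Matrix.mul_one]
    _ = (pdM d (fun p => (Ω p)⁻¹) p * Ω p) * (Ω p)⁻¹ := by
        rw [Matrix.mul_assoc]
    _ = -((Ω p)⁻¹ * pdM d Ω p * (Ω p)⁻¹) := by rw [h3, Matrix.neg_mul]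

theorem smul11 {k : ℕ} (x : Matrix (Fin 1) (Fin 1) ℂ) (B : Matrix (Fin 1) (Fin k) ℂ) :
    x * B = x 0 0 • B := by
  ext i j
  have hi : i = 0 := Subsingleton.elim _ _
  subst hi
  simp [Matrix.mul_apply]

theorem pd_add {g h : ℝ × ℝ → ℂ} (hg : Differentiable ℝ g) (hh : Differentiable ℝ h) (d p) :
    pd d (fun p => g p + h p) p = pd d g p + pd d h p := by
  unfold pd
  rw [fderiv_fun_add (hg p) (hh p)]
  simp

theorem pdM_mul3 {m k l r : ℕ} {M1 : ℝ × ℝ → Matrix (Fin m) (Fin k) ℂ}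
    {M2 : ℝ × ℝ → Matrix (Fin k) (Fin l) ℂ} {M3 : ℝ × ℝ → Matrix (Fin l) (Fin r) ℂ}
    (h1 : SmM M1) (h2 : SmM M2) (h3 : SmM M3) (d p) :
    pdM d (fun p => M1 p * M2 p * M3 p) p
      = pdM d M1 p * M2 p * M3 p + M1 p * pdM d M2 p * M3 p + M1 p * M2 p * pdM d M3 p := by
  calc pdM d (fun p => M1 p * M2 p * M3 p) p
      = pdM d (fun p => M1 p * M2 p) p * M3 p + (M1 p * M2 p) * pdM d M3 p :=
        pdM_mul (h1.mul h2) h3 d p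
    _ = (pdM d M1 p * M2 p + M1 p * pdM d M2 p) * M3 p + (M1 p * M2 p) * pdM d M3 p := by
        rw [pdM_mul h1 h2 d p]
    _ = _ := by simp only [Matrix.add_mul]

noncomputable def dx : ℝ × ℝ := (1, 0)
noncomputable def dt : ℝ × ℝ := (0, 1)

end Aux17

open Aux17

set_option maxHeartbeats 4000000 in
theorem stmt_17 {n : ℕ}
    (a₀ f₀ q₀ : ℝ × ℝ → ℂ)
    (ha₀ : ContDiff ℝ (⊤ : ℕ∞) a₀) (hf₀ : ContDiff ℝ (⊤ : ℕ∞) f₀) (hq₀ : ContDiff ℝ (⊤ : ℕ∞) q₀)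
    (hS₁ : ∀ p, pdt a₀ p = pdx (fun r => f₀ r * q₀ r) p)
    (hS₂ : ∀ p, pdt (fun r => pdx f₀ r) p = -2 * a₀ p * f₀ p)
    (hS₃ : ∀ p, pdt (fun r => pdx q₀ r) p = -2 * a₀ p * q₀ p)
    (Δ Γ : Matrix (Fin n) (Fin n) ℂ) (hΔ : IsUnit Δ) (hΓ : IsUnit Γ)
    (θ₁ θ₂ : ℝ × ℝ → Matrix (Fin 1) (Fin n) ℂ)
    (η₁ η₂ : ℝ × ℝ → Matrix (Fin n) (Fin 1) ℂ)
    (hθ₁ : ∀ i j, ContDiff ℝ (⊤ : ℕ∞) fun p => θ₁ p i j)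
    (hθ₂ : ∀ i j, ContDiff ℝ (⊤ : ℕ∞) fun p => θ₂ p i j)
    (hη₁ : ∀ i j, ContDiff ℝ (⊤ : ℕ∞) fun p => η₁ p i j)
    (hη₂ : ∀ i j, ContDiff ℝ (⊤ : ℕ∞) fun p => η₂ p i j)
    (hLθ₁ : ∀ p, pdxM θ₁ p * Δ = -(a₀ p) • θ₁ p - pdx f₀ p • θ₂ p)
    (hLθ₂ : ∀ p, pdxM θ₂ p * Δ = a₀ p • θ₂ p - pdx q₀ p • θ₁ p)
    (hLθ₃ : ∀ p, pdtM θ₁ p = ((1 : ℂ)/2) • (θ₁ p * Δ) + f₀ p • θ₂ p)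
    (hLθ₄ : ∀ p, pdtM θ₂ p = -((1 : ℂ)/2) • (θ₂ p * Δ) - q₀ p • θ₁ p)
    (hLη₁ : ∀ p, Γ * pdxM η₁ p = a₀ p • η₁ p + pdx q₀ p • η₂ p)
    (hLη₂ : ∀ p, Γ * pdxM η₂ p = -(a₀ p) • η₂ p + pdx f₀ p • η₁ p)
    (hLη₃ : ∀ p, pdtM η₁ p = -((1 : ℂ)/2) • (Γ * η₁ p) + q₀ p • η₂ p)
    (hLη₄ : ∀ p, pdtM η₂ p = ((1 : ℂ)/2) • (Γ * η₂ p) - f₀ p • η₁ p)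
    (Ω : ℝ × ℝ → Matrix (Fin n) (Fin n) ℂ)
    (hΩsmooth : ∀ i j, ContDiff ℝ (⊤ : ℕ∞) fun p => Ω p i j)
    (hΩinv : ∀ p, IsUnit (Ω p))
    (hSylv : ∀ p, Γ * Ω p - Ω p * Δ = η₁ p * θ₁ p + η₂ p * θ₂ p)
    (hΩx : ∀ p, pdxM Ω p * Δ = -(pdxM η₁ p * θ₁ p) - pdxM η₂ p * θ₂ p)
    (hΩt : ∀ p, pdtM Ω p
        = -((1 : ℂ)/2) • (η₁ p * θ₁ p) + ((1 : ℂ)/2) • (η₂ p * θ₂ p))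
    (a f q : ℝ × ℝ → ℂ)
    (ha : a = fun p => a₀ p - pdx (fun r => (θ₁ r * (Ω r)⁻¹ * η₁ r) 0 0) p)
    (hf : f = fun p => f₀ p - (θ₁ p * (Ω p)⁻¹ * η₂ p) 0 0)
    (hq : q = fun p => q₀ p - (θ₂ p * (Ω p)⁻¹ * η₁ p) 0 0) :
    (∀ p, pdt a p = pdx (fun r => f r * q r) p) ∧
    (∀ p, pdt (fun r => pdx f r) p = -2 * a p * f p) ∧
    (∀ p, pdt (fun r => pdx q r) p = -2 * a p * q p) := by
  classical
  -- convert hypotheses to pd/pdM form (definitionally equal)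
  have S1 : ∀ p, pd dt a₀ p = pd dx (fun r => f₀ r * q₀ r) p := hS₁
  have S2 : ∀ p, pd dt (fun r => pd dx f₀ r) p = -2 * a₀ p * f₀ p := hS₂
  have S3 : ∀ p, pd dt (fun r => pd dx q₀ r) p = -2 * a₀ p * q₀ p := hS₃
  have Lθ₁ : ∀ p, pdM dx θ₁ p * Δ = -(a₀ p) • θ₁ p - pd dx f₀ p • θ₂ p := hLθ₁
  have Lθ₂ : ∀ p, pdM dx θ₂ p * Δ = a₀ p • θ₂ p - pd dx q₀ p • θ₁ p := hLθ₂
  have Lθ₃ : ∀ p, pdM dt θ₁ p = ((1 : ℂ)/2) • (θ₁ p * Δ) + f₀ p • θ₂ p := hLθ₃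
  have Lθ₄ : ∀ p, pdM dt θ₂ p = -((1 : ℂ)/2) • (θ₂ p * Δ) - q₀ p • θ₁ p := hLθ₄
  have Lη₁ : ∀ p, Γ * pdM dx η₁ p = a₀ p • η₁ p + pd dx q₀ p • η₂ p := hLη₁
  have Lη₂ : ∀ p, Γ * pdM dx η₂ p = -(a₀ p) • η₂ p + pd dx f₀ p • η₁ p := hLη₂
  have Lη₃ : ∀ p, pdM dt η₁ p = -((1 : ℂ)/2) • (Γ * η₁ p) + q₀ p • η₂ p := hLη₃
  have Lη₄ : ∀ p, pdM dt η₂ p = ((1 : ℂ)/2) • (Γ * η₂ p) - f₀ p • η₁ p := hLη₄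
  have Ox : ∀ p, pdM dx Ω p * Δ = -(pdM dx η₁ p * θ₁ p) - pdM dx η₂ p * θ₂ p := hΩx
  have Ot : ∀ p, pdM dt Ω p
      = -((1 : ℂ)/2) • (η₁ p * θ₁ p) + ((1 : ℂ)/2) • (η₂ p * θ₂ p) := hΩt
  have ha' : a = fun p => a₀ p - pd dx (fun r => (θ₁ r * (Ω r)⁻¹ * η₁ r) 0 0) p := ha
  have hf' : f = fun p => f₀ p - (fun r => (θ₁ r * (Ω r)⁻¹ * η₂ r) 0 0) p := hf
  have hq' : q = fun p => q₀ p - (fun r => (θ₂ r * (Ω r)⁻¹ * η₁ r) 0 0) p := hq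
  -- basic facts about the inverse
  have sW : SmM fun r => (Ω r)⁻¹ := SmM.inv hΩsmooth hΩinv
  have hdet : ∀ p, IsUnit (Ω p).det := fun p => (Matrix.isUnit_iff_isUnit_det (Ω p)).mp (hΩinv p)
  have hy1 : ∀ p, Ω p * (Ω p)⁻¹ = 1 := fun p => Matrix.mul_nonsing_inv _ (hdet p)
  have hy2 : ∀ p, (Ω p)⁻¹ * Ω p = 1 := fun p => Matrix.nonsing_inv_mul _ (hdet p)
  have hWd : ∀ d p, pdM d (fun r => (Ω r)⁻¹) p = -((Ω p)⁻¹ * pdM d Ω p * (Ω p)⁻¹) :=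
    fun d p => pdM_inv hΩsmooth hΩinv d p
  -- smoothness
  have sv₁ : SmM fun r => θ₁ r * (Ω r)⁻¹ := SmM.mul hθ₁ sW
  have sv₂ : SmM fun r => θ₂ r * (Ω r)⁻¹ := SmM.mul hθ₂ sW
  have sα : ContDiff ℝ (⊤ : ℕ∞) (fun r => (θ₁ r * (Ω r)⁻¹ * η₁ r) 0 0) := SmM.mul (SmM.mul hθ₁ sW) hη₁ 0 0
  have sβ : ContDiff ℝ (⊤ : ℕ∞) (fun r => (θ₁ r * (Ω r)⁻¹ * η₂ r) 0 0) := SmM.mul (SmM.mul hθ₁ sW) hη₂ 0 0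
  have sγ : ContDiff ℝ (⊤ : ℕ∞) (fun r => (θ₂ r * (Ω r)⁻¹ * η₁ r) 0 0) := SmM.mul (SmM.mul hθ₂ sW) hη₁ 0 0
  have sδ : ContDiff ℝ (⊤ : ℕ∞) (fun r => (θ₂ r * (Ω r)⁻¹ * η₂ r) 0 0) := SmM.mul (SmM.mul hθ₂ sW) hη₂ 0 0
  have sF : ContDiff ℝ (⊤ : ℕ∞) (fun r => (θ₁ r * (Ω r)⁻¹ * (Γ * η₂ r)) 0 0) := SmM.mul (SmM.mul hθ₁ sW) (SmM.constMul Γ hη₂) 0 0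
  have sH : ContDiff ℝ (⊤ : ℕ∞) (fun r => (θ₂ r * (Ω r)⁻¹ * (Γ * η₁ r)) 0 0) := SmM.mul (SmM.mul hθ₂ sW) (SmM.constMul Γ hη₁) 0 0
  -- Sylvester equation consequences
  have h2 : ∀ p, Γ * Ω p = Ω p * Δ + (η₁ p * θ₁ p + η₂ p * θ₂ p) := fun p => by
    rw [← hSylv p]; abel
  have key : ∀ p, (Ω p)⁻¹ * Γ = Δ * (Ω p)⁻¹
      + ((Ω p)⁻¹ * η₁ p * θ₁ p * (Ω p)⁻¹ + (Ω p)⁻¹ * η₂ p * θ₂ p * (Ω p)⁻¹) := fun p => by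
    calc (Ω p)⁻¹ * Γ = (Ω p)⁻¹ * Γ * (Ω p * (Ω p)⁻¹) := by rw [hy1 p, Matrix.mul_one]
      _ = (Ω p)⁻¹ * (Γ * Ω p) * (Ω p)⁻¹ := by simp only [Matrix.mul_assoc]
      _ = (Ω p)⁻¹ * (Ω p * Δ + (η₁ p * θ₁ p + η₂ p * θ₂ p)) * (Ω p)⁻¹ := by rw [h2 p]
      _ = _ := by
        simp only [Matrix.mul_add, Matrix.add_mul, ← Matrix.mul_assoc, hy2 p, Matrix.one_mul]
  have hΔW : ∀ p, Δ * (Ω p)⁻¹ = (Ω p)⁻¹ * Γ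
      - ((Ω p)⁻¹ * η₁ p * θ₁ p * (Ω p)⁻¹ + (Ω p)⁻¹ * η₂ p * θ₂ p * (Ω p)⁻¹) := fun p => by
    rw [key p]; abel
  have hC1 : ∀ (k : ℕ) (A : Matrix (Fin k) (Fin n) ℂ) (p : ℝ × ℝ),
      A * (Ω p)⁻¹ * Γ = A * Δ * (Ω p)⁻¹
        + (A * (Ω p)⁻¹ * η₁ p * θ₁ p * (Ω p)⁻¹ + A * (Ω p)⁻¹ * η₂ p * θ₂ p * (Ω p)⁻¹) :=
    fun k A p => by
      rw [Matrix.mul_assoc, key p]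
      simp only [Matrix.mul_add, ← Matrix.mul_assoc]
  have hC2 : ∀ (k : ℕ) (A : Matrix (Fin k) (Fin n) ℂ) (p : ℝ × ℝ),
      A * pdM dx Ω p * Δ = -(A * pdM dx η₁ p * θ₁ p) - A * pdM dx η₂ p * θ₂ p :=
    fun k A p => by
      rw [Matrix.mul_assoc, Ox p]
      simp only [Matrix.mul_sub, Matrix.mul_neg, ← Matrix.mul_assoc]
  -- expansions of derivatives of the scalar quantities
  have Eα : ∀ d p, pd d (fun r => (θ₁ r * (Ω r)⁻¹ * η₁ r) 0 0) p = (pdM d θ₁ p * (Ω p)⁻¹ * η₁ p) 0 0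
      + (θ₁ p * pdM d (fun r => (Ω r)⁻¹) p * η₁ p) 0 0 + (θ₁ p * (Ω p)⁻¹ * pdM d η₁ p) 0 0 := fun d p => by
    calc pd d (fun r => (θ₁ r * (Ω r)⁻¹ * η₁ r) 0 0) p = (pdM d (fun r => θ₁ r * (Ω r)⁻¹ * η₁ r) p) 0 0 := rfl
      _ = (pdM d θ₁ p * (Ω p)⁻¹ * η₁ p + θ₁ p * pdM d (fun r => (Ω r)⁻¹) p * η₁ p
            + θ₁ p * (Ω p)⁻¹ * pdM d η₁ p) 0 0 :=
        congrArg (fun X : Matrix (Fin 1) (Fin 1) ℂ => X 0 0) (pdM_mul3 hθ₁ sW hη₁ d p)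
      _ = _ := by simp only [Matrix.add_apply]
  have Eβ : ∀ d p, pd d (fun r => (θ₁ r * (Ω r)⁻¹ * η₂ r) 0 0) p = (pdM d θ₁ p * (Ω p)⁻¹ * η₂ p) 0 0
      + (θ₁ p * pdM d (fun r => (Ω r)⁻¹) p * η₂ p) 0 0 + (θ₁ p * (Ω p)⁻¹ * pdM d η₂ p) 0 0 := fun d p => by
    calc pd d (fun r => (θ₁ r * (Ω r)⁻¹ * η₂ r) 0 0) p = (pdM d (fun r => θ₁ r * (Ω r)⁻¹ * η₂ r) p) 0 0 := rfl
      _ = (pdM d θ₁ p * (Ω p)⁻¹ * η₂ p + θ₁ p * pdM d (fun r => (Ω r)⁻¹) p * η₂ p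
            + θ₁ p * (Ω p)⁻¹ * pdM d η₂ p) 0 0 :=
        congrArg (fun X : Matrix (Fin 1) (Fin 1) ℂ => X 0 0) (pdM_mul3 hθ₁ sW hη₂ d p)
      _ = _ := by simp only [Matrix.add_apply]
  have Eγ : ∀ d p, pd d (fun r => (θ₂ r * (Ω r)⁻¹ * η₁ r) 0 0) p = (pdM d θ₂ p * (Ω p)⁻¹ * η₁ p) 0 0
      + (θ₂ p * pdM d (fun r => (Ω r)⁻¹) p * η₁ p) 0 0 + (θ₂ p * (Ω p)⁻¹ * pdM d η₁ p) 0 0 := fun d p => by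
    calc pd d (fun r => (θ₂ r * (Ω r)⁻¹ * η₁ r) 0 0) p = (pdM d (fun r => θ₂ r * (Ω r)⁻¹ * η₁ r) p) 0 0 := rfl
      _ = (pdM d θ₂ p * (Ω p)⁻¹ * η₁ p + θ₂ p * pdM d (fun r => (Ω r)⁻¹) p * η₁ p
            + θ₂ p * (Ω p)⁻¹ * pdM d η₁ p) 0 0 :=
        congrArg (fun X : Matrix (Fin 1) (Fin 1) ℂ => X 0 0) (pdM_mul3 hθ₂ sW hη₁ d p)
      _ = _ := by simp only [Matrix.add_apply]
  have Eδ : ∀ d p, pd d (fun r => (θ₂ r * (Ω r)⁻¹ * η₂ r) 0 0) p = (pdM d θ₂ p * (Ω p)⁻¹ * η₂ p) 0 0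
      + (θ₂ p * pdM d (fun r => (Ω r)⁻¹) p * η₂ p) 0 0 + (θ₂ p * (Ω p)⁻¹ * pdM d η₂ p) 0 0 := fun d p => by
    calc pd d (fun r => (θ₂ r * (Ω r)⁻¹ * η₂ r) 0 0) p = (pdM d (fun r => θ₂ r * (Ω r)⁻¹ * η₂ r) p) 0 0 := rfl
      _ = (pdM d θ₂ p * (Ω p)⁻¹ * η₂ p + θ₂ p * pdM d (fun r => (Ω r)⁻¹) p * η₂ p
            + θ₂ p * (Ω p)⁻¹ * pdM d η₂ p) 0 0 :=
        congrArg (fun X : Matrix (Fin 1) (Fin 1) ℂ => X 0 0) (pdM_mul3 hθ₂ sW hη₂ d p)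
      _ = _ := by simp only [Matrix.add_apply]
  -- trace identity : α + δ is constant
  have hK : ∀ p, ((θ₁ p * (Ω p)⁻¹ * η₁ p) 0 0) + ((θ₂ p * (Ω p)⁻¹ * η₂ p) 0 0) = Matrix.trace Γ - Matrix.trace Δ := fun p => by
    have t1 : ((θ₁ p * (Ω p)⁻¹ * η₁ p) 0 0) = Matrix.trace (η₁ p * θ₁ p * (Ω p)⁻¹) := by
      rw [← Matrix.trace_fin_one (θ₁ p * (Ω p)⁻¹ * η₁ p),
        Matrix.trace_mul_comm (θ₁ p * (Ω p)⁻¹) (η₁ p), ← Matrix.mul_assoc]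
    have t2 : ((θ₂ p * (Ω p)⁻¹ * η₂ p) 0 0) = Matrix.trace (η₂ p * θ₂ p * (Ω p)⁻¹) := by
      rw [← Matrix.trace_fin_one (θ₂ p * (Ω p)⁻¹ * η₂ p),
        Matrix.trace_mul_comm (θ₂ p * (Ω p)⁻¹) (η₂ p), ← Matrix.mul_assoc]
    rw [t1, t2, ← Matrix.trace_add, ← Matrix.add_mul, ← hSylv p, Matrix.sub_mul,
      Matrix.trace_sub, Matrix.mul_assoc Γ (Ω p) ((Ω p)⁻¹), hy1 p, Matrix.mul_one,
      Matrix.mul_assoc (Ω p) Δ ((Ω p)⁻¹), Matrix.trace_mul_comm (Ω p) (Δ * (Ω p)⁻¹),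
      Matrix.mul_assoc Δ ((Ω p)⁻¹) (Ω p), hy2 p, Matrix.mul_one]
  have hDδ : ∀ d p, pd d (fun r => (θ₂ r * (Ω r)⁻¹ * η₂ r) 0 0) p = -(pd d (fun r => (θ₁ r * (Ω r)⁻¹ * η₁ r) 0 0) p) := fun d p => by
    have hδconst : (fun r => (θ₂ r * (Ω r)⁻¹ * η₂ r) 0 0) = fun r => (Matrix.trace Γ - Matrix.trace Δ) - (fun r => (θ₁ r * (Ω r)⁻¹ * η₁ r) 0 0) r :=
      funext fun r => by rw [← hK r]; ring
    rw [hδconst, pd_sub (differentiable_const _) (sα.differentiable (by simp)) d p,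
      pd_const, zero_sub]
  -- refined t-derivative of the inverse
  have hWt2 : ∀ p, pdM dt (fun r => (Ω r)⁻¹) p = ((1:ℂ)/2) • ((Ω p)⁻¹ * η₁ p * θ₁ p * (Ω p)⁻¹)
      - ((1:ℂ)/2) • ((Ω p)⁻¹ * η₂ p * θ₂ p * (Ω p)⁻¹) := fun p => by
    rw [hWd dt p, Ot p]
    simp only [Matrix.mul_add, Matrix.add_mul, Matrix.mul_smul, Matrix.smul_mul,
      Matrix.mul_neg, Matrix.neg_mul, neg_smul, ← Matrix.mul_assoc]
    module
  -- the dressed x-equations for θ₁ (Ω)⁻¹ and θ₂ (Ω)⁻¹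
  have Dv1 : ∀ p, pdM dx (fun r => θ₁ r * (Ω r)⁻¹) p * Γ
      = (-(a₀ p) + pd dx (fun r => (θ₁ r * (Ω r)⁻¹ * η₁ r) 0 0) p) • (θ₁ p * (Ω p)⁻¹)
        + (-(pd dx f₀ p) + pd dx (fun r => (θ₁ r * (Ω r)⁻¹ * η₂ r) 0 0) p) • (θ₂ p * (Ω p)⁻¹) := fun p => by
    rw [show pdM dx (fun r => θ₁ r * (Ω r)⁻¹) p
        = pdM dx θ₁ p * (Ω p)⁻¹ + θ₁ p * pdM dx (fun r => (Ω r)⁻¹) p from pdM_mul hθ₁ sW dx p]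
    rw [Eα dx p, Eβ dx p, hWd dx p]
    simp only [Matrix.add_mul, Matrix.neg_mul, Matrix.mul_neg, ← Matrix.mul_assoc,
      Matrix.neg_apply]
    rw [hC1 1 (pdM dx θ₁ p) p, hC1 1 (θ₁ p * (Ω p)⁻¹ * pdM dx Ω p) p]
    rw [Lθ₁ p, hC2 1 (θ₁ p * (Ω p)⁻¹) p]
    simp only [Matrix.sub_mul, Matrix.add_mul, Matrix.smul_mul, Matrix.neg_mul,
      Matrix.mul_neg, ← Matrix.mul_assoc, smul11, Matrix.smul_apply, Matrix.neg_apply,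
      Matrix.add_apply, Matrix.sub_apply, smul_eq_mul, smul_smul]
    module
  have Dv2 : ∀ p, pdM dx (fun r => θ₂ r * (Ω r)⁻¹) p * Γ
      = (a₀ p + pd dx (fun r => (θ₂ r * (Ω r)⁻¹ * η₂ r) 0 0) p) • (θ₂ p * (Ω p)⁻¹)
        + (-(pd dx q₀ p) + pd dx (fun r => (θ₂ r * (Ω r)⁻¹ * η₁ r) 0 0) p) • (θ₁ p * (Ω p)⁻¹) := fun p => by
    rw [show pdM dx (fun r => θ₂ r * (Ω r)⁻¹) p
        = pdM dx θ₂ p * (Ω p)⁻¹ + θ₂ p * pdM dx (fun r => (Ω r)⁻¹) p from pdM_mul hθ₂ sW dx p]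
    rw [Eγ dx p, Eδ dx p, hWd dx p]
    simp only [Matrix.add_mul, Matrix.neg_mul, Matrix.mul_neg, ← Matrix.mul_assoc,
      Matrix.neg_apply]
    rw [hC1 1 (pdM dx θ₂ p) p, hC1 1 (θ₂ p * (Ω p)⁻¹ * pdM dx Ω p) p]
    rw [Lθ₂ p, hC2 1 (θ₂ p * (Ω p)⁻¹) p]
    simp only [Matrix.sub_mul, Matrix.add_mul, Matrix.smul_mul, Matrix.neg_mul,
      Matrix.mul_neg, ← Matrix.mul_assoc, smul11, Matrix.smul_apply, Matrix.neg_apply,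
      Matrix.add_apply, Matrix.sub_apply, smul_eq_mul, smul_smul]
    module
  -- scalar t-derivative identities
  have P1 : ∀ p, pd dt (fun r => (θ₁ r * (Ω r)⁻¹ * η₁ r) 0 0) p = f₀ p * ((θ₂ p * (Ω p)⁻¹ * η₁ p) 0 0) + q₀ p * ((θ₁ p * (Ω p)⁻¹ * η₂ p) 0 0) - ((θ₁ p * (Ω p)⁻¹ * η₂ p) 0 0) * ((θ₂ p * (Ω p)⁻¹ * η₁ p) 0 0) := fun p => by
    rw [Eα dt p, Lθ₃ p, hWt2 p, Lη₃ p]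
    simp only [Matrix.add_mul, Matrix.smul_mul, Matrix.sub_mul]
    rw [Matrix.mul_assoc (θ₁ p) Δ ((Ω p)⁻¹), hΔW p]
    simp only [Matrix.add_mul, Matrix.mul_add, Matrix.sub_mul, Matrix.mul_sub,
      Matrix.smul_mul, Matrix.mul_smul, Matrix.neg_mul, Matrix.mul_neg,
      ← Matrix.mul_assoc, smul11, Matrix.smul_apply, Matrix.add_apply, Matrix.sub_apply,
      Matrix.neg_apply, smul_eq_mul]
    ring
  have P2 : ∀ p, pd dt (fun r => (θ₁ r * (Ω r)⁻¹ * η₂ r) 0 0) p = ((θ₁ p * (Ω p)⁻¹ * (Γ * η₂ p)) 0 0) + f₀ p * ((θ₂ p * (Ω p)⁻¹ * η₂ p) 0 0) - ((θ₁ p * (Ω p)⁻¹ * η₂ p) 0 0) * ((θ₂ p * (Ω p)⁻¹ * η₂ p) 0 0) - f₀ p * ((θ₁ p * (Ω p)⁻¹ * η₁ p) 0 0) := fun p => by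
    rw [Eβ dt p, Lθ₃ p, hWt2 p, Lη₄ p]
    simp only [Matrix.add_mul, Matrix.smul_mul, Matrix.sub_mul]
    rw [Matrix.mul_assoc (θ₁ p) Δ ((Ω p)⁻¹), hΔW p]
    simp only [Matrix.add_mul, Matrix.mul_add, Matrix.sub_mul, Matrix.mul_sub,
      Matrix.smul_mul, Matrix.mul_smul, Matrix.neg_mul, Matrix.mul_neg,
      ← Matrix.mul_assoc, smul11, Matrix.smul_apply, Matrix.add_apply, Matrix.sub_apply,
      Matrix.neg_apply, smul_eq_mul]
    ring
  have P4 : ∀ p, pd dt (fun r => (θ₂ r * (Ω r)⁻¹ * η₁ r) 0 0) p = ((θ₂ p * (Ω p)⁻¹ * η₁ p) 0 0) * ((θ₁ p * (Ω p)⁻¹ * η₁ p) 0 0) - ((θ₂ p * (Ω p)⁻¹ * (Γ * η₁ p)) 0 0) - q₀ p * ((θ₁ p * (Ω p)⁻¹ * η₁ p) 0 0) + q₀ p * ((θ₂ p * (Ω p)⁻¹ * η₂ p) 0 0) := fun p => by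
    rw [Eγ dt p, Lθ₄ p, hWt2 p, Lη₃ p]
    simp only [Matrix.add_mul, Matrix.smul_mul, Matrix.sub_mul, Matrix.neg_mul,
      neg_smul]
    rw [Matrix.mul_assoc (θ₂ p) Δ ((Ω p)⁻¹), hΔW p]
    simp only [Matrix.add_mul, Matrix.mul_add, Matrix.sub_mul, Matrix.mul_sub,
      Matrix.smul_mul, Matrix.mul_smul, Matrix.neg_mul, Matrix.mul_neg,
      ← Matrix.mul_assoc, smul11, Matrix.smul_apply, Matrix.add_apply, Matrix.sub_apply,
      Matrix.neg_apply, smul_eq_mul]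
    ring
  -- scalar x-derivatives of the Γ-capped quantities
  have P3 : ∀ p, pd dx (fun r => (θ₁ r * (Ω r)⁻¹ * (Γ * η₂ r)) 0 0) p = (-(a₀ p) + pd dx (fun r => (θ₁ r * (Ω r)⁻¹ * η₁ r) 0 0) p) * ((θ₁ p * (Ω p)⁻¹ * η₂ p) 0 0)
      + (-(pd dx f₀ p) + pd dx (fun r => (θ₁ r * (Ω r)⁻¹ * η₂ r) 0 0) p) * ((θ₂ p * (Ω p)⁻¹ * η₂ p) 0 0) + (-(a₀ p) * ((θ₁ p * (Ω p)⁻¹ * η₂ p) 0 0) + pd dx f₀ p * ((θ₁ p * (Ω p)⁻¹ * η₁ p) 0 0)) := fun p => by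
    calc pd dx (fun r => (θ₁ r * (Ω r)⁻¹ * (Γ * η₂ r)) 0 0) p = (pdM dx (fun r => θ₁ r * (Ω r)⁻¹ * (Γ * η₂ r)) p) 0 0 := rfl
      _ = (pdM dx (fun r => θ₁ r * (Ω r)⁻¹) p * (Γ * η₂ p)
            + (θ₁ p * (Ω p)⁻¹) * pdM dx (fun r => Γ * η₂ r) p) 0 0 := by
          rw [show pdM dx (fun r => θ₁ r * (Ω r)⁻¹ * (Γ * η₂ r)) p
              = pdM dx (fun r => θ₁ r * (Ω r)⁻¹) p * (Γ * η₂ p)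
                + (θ₁ p * (Ω p)⁻¹) * pdM dx (fun r => Γ * η₂ r) p
            from pdM_mul sv₁ (SmM.constMul Γ hη₂) dx p]
      _ = _ := by
          rw [show pdM dx (fun r => Γ * η₂ r) p = Γ * pdM dx η₂ p
            from pdM_constMul Γ hη₂ dx p]
          rw [← Matrix.mul_assoc (pdM dx (fun r => θ₁ r * (Ω r)⁻¹) p) Γ (η₂ p), Dv1 p,
            Lη₂ p]
          simp only [Matrix.add_mul, Matrix.mul_add, Matrix.smul_mul, Matrix.mul_smul,
            ← Matrix.mul_assoc, Matrix.add_apply, Matrix.smul_apply, smul_eq_mul]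
  have P5 : ∀ p, pd dx (fun r => (θ₂ r * (Ω r)⁻¹ * (Γ * η₁ r)) 0 0) p = (a₀ p + pd dx (fun r => (θ₂ r * (Ω r)⁻¹ * η₂ r) 0 0) p) * ((θ₂ p * (Ω p)⁻¹ * η₁ p) 0 0)
      + (-(pd dx q₀ p) + pd dx (fun r => (θ₂ r * (Ω r)⁻¹ * η₁ r) 0 0) p) * ((θ₁ p * (Ω p)⁻¹ * η₁ p) 0 0) + (a₀ p * ((θ₂ p * (Ω p)⁻¹ * η₁ p) 0 0) + pd dx q₀ p * ((θ₂ p * (Ω p)⁻¹ * η₂ p) 0 0)) := fun p => by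
    calc pd dx (fun r => (θ₂ r * (Ω r)⁻¹ * (Γ * η₁ r)) 0 0) p = (pdM dx (fun r => θ₂ r * (Ω r)⁻¹ * (Γ * η₁ r)) p) 0 0 := rfl
      _ = (pdM dx (fun r => θ₂ r * (Ω r)⁻¹) p * (Γ * η₁ p)
            + (θ₂ p * (Ω p)⁻¹) * pdM dx (fun r => Γ * η₁ r) p) 0 0 := by
          rw [show pdM dx (fun r => θ₂ r * (Ω r)⁻¹ * (Γ * η₁ r)) p
              = pdM dx (fun r => θ₂ r * (Ω r)⁻¹) p * (Γ * η₁ p)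
                + (θ₂ p * (Ω p)⁻¹) * pdM dx (fun r => Γ * η₁ r) p
            from pdM_mul sv₂ (SmM.constMul Γ hη₁) dx p]
      _ = _ := by
          rw [show pdM dx (fun r => Γ * η₁ r) p = Γ * pdM dx η₁ p
            from pdM_constMul Γ hη₁ dx p]
          rw [← Matrix.mul_assoc (pdM dx (fun r => θ₂ r * (Ω r)⁻¹) p) Γ (η₁ p), Dv2 p,
            Lη₁ p]
          simp only [Matrix.add_mul, Matrix.mul_add, Matrix.smul_mul, Matrix.mul_smul,
            ← Matrix.mul_assoc, Matrix.add_apply, Matrix.smul_apply, smul_eq_mul]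
  -- final assembly
  refine ⟨?_, ?_, ?_⟩
  · -- first equation
    intro p
    have hfq : (fun r => f r * q r) = fun r => f₀ r * q₀ r - pd dt (fun r => (θ₁ r * (Ω r)⁻¹ * η₁ r) 0 0) r := by
      funext r
      simp only [hf', hq']
      rw [P1 r]
      ring
    calc pd dt a p
        = pd dt (fun r => a₀ r - pd dx (fun r => (θ₁ r * (Ω r)⁻¹ * η₁ r) 0 0) r) p := by rw [ha']
      _ = pd dt a₀ p - pd dt (fun r => pd dx (fun r => (θ₁ r * (Ω r)⁻¹ * η₁ r) 0 0) r) p :=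
          pd_sub (ha₀.differentiable (by simp))
            ((contDiff_pd sα dx).differentiable (by simp)) dt p
      _ = pd dx (fun r => f₀ r * q₀ r) p - pd dx (fun r => pd dt (fun r => (θ₁ r * (Ω r)⁻¹ * η₁ r) 0 0) r) p := by
          rw [S1 p, pd_comm sα dt dx p]
      _ = pd dx (fun r => f₀ r * q₀ r - pd dt (fun r => (θ₁ r * (Ω r)⁻¹ * η₁ r) 0 0) r) p :=
          (pd_sub ((hf₀.mul hq₀).differentiable (by simp))
            ((contDiff_pd sα dt).differentiable (by simp)) dx p).symm
      _ = pd dx (fun r => f r * q r) p := by rw [hfq]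
  · -- second equation
    intro p
    have hfx : (fun r => pd dx f r) = fun r => pd dx f₀ r - pd dx (fun r => (θ₁ r * (Ω r)⁻¹ * η₂ r) 0 0) r := by
      funext r
      rw [hf']
      exact pd_sub (hf₀.differentiable (by simp)) (sβ.differentiable (by simp)) dx r
    have EXP2 : pd dx (fun r => ((θ₁ r * (Ω r)⁻¹ * (Γ * η₂ r)) 0 0) + f₀ r * ((θ₂ r * (Ω r)⁻¹ * η₂ r) 0 0) - ((θ₁ r * (Ω r)⁻¹ * η₂ r) 0 0) * ((θ₂ r * (Ω r)⁻¹ * η₂ r) 0 0) - f₀ r * ((θ₁ r * (Ω r)⁻¹ * η₁ r) 0 0)) p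
        = pd dx (fun r => (θ₁ r * (Ω r)⁻¹ * (Γ * η₂ r)) 0 0) p + (pd dx f₀ p * ((θ₂ p * (Ω p)⁻¹ * η₂ p) 0 0) + f₀ p * pd dx (fun r => (θ₂ r * (Ω r)⁻¹ * η₂ r) 0 0) p)
          - (pd dx (fun r => (θ₁ r * (Ω r)⁻¹ * η₂ r) 0 0) p * ((θ₂ p * (Ω p)⁻¹ * η₂ p) 0 0) + ((θ₁ p * (Ω p)⁻¹ * η₂ p) 0 0) * pd dx (fun r => (θ₂ r * (Ω r)⁻¹ * η₂ r) 0 0) p)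
          - (pd dx f₀ p * ((θ₁ p * (Ω p)⁻¹ * η₁ p) 0 0) + f₀ p * pd dx (fun r => (θ₁ r * (Ω r)⁻¹ * η₁ r) 0 0) p) := by
      rw [pd_sub (((sF.add (hf₀.mul sδ)).sub (sβ.mul sδ)).differentiable (by simp))
          ((hf₀.mul sα).differentiable (by simp)) dx p,
        pd_sub ((sF.add (hf₀.mul sδ)).differentiable (by simp))
          ((sβ.mul sδ).differentiable (by simp)) dx p,
        pd_add (sF.differentiable (by simp)) ((hf₀.mul sδ).differentiable (by simp)) dx p,
        pd_mul hf₀ sδ dx p, pd_mul sβ sδ dx p, pd_mul hf₀ sα dx p]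
    calc pd dt (fun r => pd dx f r) p
        = pd dt (fun r => pd dx f₀ r - pd dx (fun r => (θ₁ r * (Ω r)⁻¹ * η₂ r) 0 0) r) p := by rw [hfx]
      _ = pd dt (fun r => pd dx f₀ r) p - pd dt (fun r => pd dx (fun r => (θ₁ r * (Ω r)⁻¹ * η₂ r) 0 0) r) p :=
          pd_sub ((contDiff_pd hf₀ dx).differentiable (by simp))
            ((contDiff_pd sβ dx).differentiable (by simp)) dt p
      _ = -2 * a₀ p * f₀ p - pd dx (fun r => pd dt (fun r => (θ₁ r * (Ω r)⁻¹ * η₂ r) 0 0) r) p := by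
          rw [S2 p, pd_comm sβ dt dx p]
      _ = -2 * a₀ p * f₀ p
            - pd dx (fun r => ((θ₁ r * (Ω r)⁻¹ * (Γ * η₂ r)) 0 0) + f₀ r * ((θ₂ r * (Ω r)⁻¹ * η₂ r) 0 0) - ((θ₁ r * (Ω r)⁻¹ * η₂ r) 0 0) * ((θ₂ r * (Ω r)⁻¹ * η₂ r) 0 0) - f₀ r * ((θ₁ r * (Ω r)⁻¹ * η₁ r) 0 0)) p := by
          rw [funext P2]
      _ = -2 * a p * f p := by
          rw [EXP2, P3 p, hDδ dx p]
          simp only [ha', hf']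
          ring
  · -- third equation
    intro p
    have hqx : (fun r => pd dx q r) = fun r => pd dx q₀ r - pd dx (fun r => (θ₂ r * (Ω r)⁻¹ * η₁ r) 0 0) r := by
      funext r
      rw [hq']
      exact pd_sub (hq₀.differentiable (by simp)) (sγ.differentiable (by simp)) dx r
    have EXP3 : pd dx (fun r => ((θ₂ r * (Ω r)⁻¹ * η₁ r) 0 0) * ((θ₁ r * (Ω r)⁻¹ * η₁ r) 0 0) - ((θ₂ r * (Ω r)⁻¹ * (Γ * η₁ r)) 0 0) - q₀ r * ((θ₁ r * (Ω r)⁻¹ * η₁ r) 0 0) + q₀ r * ((θ₂ r * (Ω r)⁻¹ * η₂ r) 0 0)) p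
        = (pd dx (fun r => (θ₂ r * (Ω r)⁻¹ * η₁ r) 0 0) p * ((θ₁ p * (Ω p)⁻¹ * η₁ p) 0 0) + ((θ₂ p * (Ω p)⁻¹ * η₁ p) 0 0) * pd dx (fun r => (θ₁ r * (Ω r)⁻¹ * η₁ r) 0 0) p) - pd dx (fun r => (θ₂ r * (Ω r)⁻¹ * (Γ * η₁ r)) 0 0) p
          - (pd dx q₀ p * ((θ₁ p * (Ω p)⁻¹ * η₁ p) 0 0) + q₀ p * pd dx (fun r => (θ₁ r * (Ω r)⁻¹ * η₁ r) 0 0) p)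
          + (pd dx q₀ p * ((θ₂ p * (Ω p)⁻¹ * η₂ p) 0 0) + q₀ p * pd dx (fun r => (θ₂ r * (Ω r)⁻¹ * η₂ r) 0 0) p) := by
      rw [pd_add ((((sγ.mul sα).sub sH).sub (hq₀.mul sα)).differentiable (by simp))
          ((hq₀.mul sδ).differentiable (by simp)) dx p,
        pd_sub (((sγ.mul sα).sub sH).differentiable (by simp))
          ((hq₀.mul sα).differentiable (by simp)) dx p,
        pd_sub ((sγ.mul sα).differentiable (by simp)) (sH.differentiable (by simp)) dx p,
        pd_mul sγ sα dx p, pd_mul hq₀ sα dx p, pd_mul hq₀ sδ dx p]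
    calc pd dt (fun r => pd dx q r) p
        = pd dt (fun r => pd dx q₀ r - pd dx (fun r => (θ₂ r * (Ω r)⁻¹ * η₁ r) 0 0) r) p := by rw [hqx]
      _ = pd dt (fun r => pd dx q₀ r) p - pd dt (fun r => pd dx (fun r => (θ₂ r * (Ω r)⁻¹ * η₁ r) 0 0) r) p :=
          pd_sub ((contDiff_pd hq₀ dx).differentiable (by simp))
            ((contDiff_pd sγ dx).differentiable (by simp)) dt p
      _ = -2 * a₀ p * q₀ p - pd dx (fun r => pd dt (fun r => (θ₂ r * (Ω r)⁻¹ * η₁ r) 0 0) r) p := by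
          rw [S3 p, pd_comm sγ dt dx p]
      _ = -2 * a₀ p * q₀ p
            - pd dx (fun r => ((θ₂ r * (Ω r)⁻¹ * η₁ r) 0 0) * ((θ₁ r * (Ω r)⁻¹ * η₁ r) 0 0) - ((θ₂ r * (Ω r)⁻¹ * (Γ * η₁ r)) 0 0) - q₀ r * ((θ₁ r * (Ω r)⁻¹ * η₁ r) 0 0) + q₀ r * ((θ₂ r * (Ω r)⁻¹ * η₂ r) 0 0)) p := by
          rw [funext P4]
      _ = -2 * a p * q p := by
          rw [EXP3, P5 p, hDδ dx p]
          simp only [ha', hq']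
          ring
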